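/- Let S = {(v,w) ∈ ℕ² : 0 ≤ v ≤ 3 and 0 ≤ w ≤ 3} index the degree-3 maximal order basis on the reference quadrilateral. Let M be the diagonal real S×S matrix with M_{(v,w),(v,w)} = 4/((2v+1)(2w+1)). For real parameters q0, q1, q2, let Q be the symmetric S×S matrix whose only nonzero entries (listing one entry of each symmetric pair) are Q_{(1,1),(3,3)} = q2, Q_{(2,1),(2,3)} = Q_{(1,2),(3,2)} = −3·q2/5, Q_{(3,1),(1,3)} = q2, Q_{(3,1),(3,3)} = Q_{(1,3),(3,3)} = −5·q1/3, Q_{(2,2),(2,2)} = 9·q2/25, Q_{(3,2),(3,2)} = Q_{(2,3),(2,3)} = q1, and Q_{(3,3),(3,3)} = q0. Then M + Q is positive definite if and only if q2² < 16/441, 140·q1 − 189·q2² + 16 > 0, and (4 − 21·q2)·(1008·q2 + 2352·q0 + 12348·q2·q0 − 5292·q2² − 27783·q2³ − 68600·q1² + 192) > 0. -/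

import Mathlib

/-!
Only basis functions in small groups are coupled by `M + Q`: up to a permutation it is block
diagonal, with eight `1 × 1` blocks, two copies of one `2 × 2` block (on `(2,1), (2,3)` and on
`(1,2), (3,2)`) and a `4 × 4` block on `(1,1), (3,1), (1,3), (3,3)`. So `M + Q` is positive definite
iff every block is. Completing the square in the `2 × 2` block leaves its determinant
`140 q1 - 189 q2² + 16`. The `4 × 4` block is invariant under swapping `(3,1)` and `(1,3)`; the
antisymmetric direction carries the factor `4 - 21 q2`, and the symmetric `3 × 3` part is positive
definite iff `4 + 21 q2 > 0` and its determinant, a positive multiple of the last factor of the third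
condition, is positive. The `1 × 1` block `(4 + 9 q2)/25` is then positive automatically.
-/

/-- Modal mass matrix of the degree-3 maximal order tensor-product Legendre basis:
`M_{(v,w),(v,w)} = 4/((2v+1)(2w+1))`. -/
noncomputable def massMO3 : Matrix (Fin 4 × Fin 4) (Fin 4 × Fin 4) ℝ :=
  Matrix.diagonal fun p =>
    (4 : ℝ) / (((2 * (p.1 : ℕ) + 1) * (2 * (p.2 : ℕ) + 1) : ℕ) : ℝ)

/-- The symmetric filter matrix `Q(q0, q1, q2)` for the degree-3 maximal order basis. -/
noncomputable def filterMO3 (q0 q1 q2 : ℝ) : Matrix (Fin 4 × Fin 4) (Fin 4 × Fin 4) ℝ :=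
  fun i j =>
    if (i = (1, 1) ∧ j = (3, 3)) ∨ (i = (3, 3) ∧ j = (1, 1)) ∨
       (i = (3, 1) ∧ j = (1, 3)) ∨ (i = (1, 3) ∧ j = (3, 1)) then q2
    else if (i = (2, 1) ∧ j = (2, 3)) ∨ (i = (2, 3) ∧ j = (2, 1)) ∨
            (i = (1, 2) ∧ j = (3, 2)) ∨ (i = (3, 2) ∧ j = (1, 2)) then -3 * q2 / 5
    else if (i = (3, 1) ∧ j = (3, 3)) ∨ (i = (3, 3) ∧ j = (3, 1)) ∨
            (i = (1, 3) ∧ j = (3, 3)) ∨ (i = (3, 3) ∧ j = (1, 3)) then -5 * q1 / 3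
    else if i = (2, 2) ∧ j = (2, 2) then 9 * q2 / 25
    else if (i = (3, 2) ∧ j = (3, 2)) ∨ (i = (2, 3) ∧ j = (2, 3)) then q1
    else if i = (3, 3) ∧ j = (3, 3) then q0
    else 0

open Matrix

noncomputable def blockForm₂ (q1 q2 x y : ℝ) : ℝ := 4/15*x^2 - 6*q2/5*x*y + (4/35+q1)*y^2

noncomputable def blockForm₄ (q0 q1 q2 x₁ x₂ x₃ x₄ : ℝ) : ℝ :=
  4/9*x₁^2 + 4/21*x₂^2 + 4/21*x₃^2 + (4/49+q0)*x₄^2 + 2*q2*x₁*x₄ + 2*q2*x₂*x₃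
    - 10*q1/3*(x₂*x₄ + x₃*x₄)

theorem filterMO3_isSymm (q0 q1 q2 : ℝ) : (filterMO3 q0 q1 q2).IsSymm := by
  ext i j
  simp only [transpose_apply, filterMO3]
  congr 1 <;> simp only [or_comm, or_left_comm, and_comm]

theorem dotProduct_massMO3_add_filterMO3_mulVec (q0 q1 q2 : ℝ) (x : Fin 4 × Fin 4 → ℝ) :
    star x ⬝ᵥ ((massMO3 + filterMO3 q0 q1 q2) *ᵥ x) =
      4*x (0,0)^2 + 4/3*x (0,1)^2 + 4/5*x (0,2)^2 + 4/7*x (0,3)^2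
      + 4/3*x (1,0)^2 + 4/5*x (2,0)^2 + 4/7*x (3,0)^2 + (4+9*q2)/25*x (2,2)^2
      + blockForm₂ q1 q2 (x (2,1)) (x (2,3)) + blockForm₂ q1 q2 (x (1,2)) (x (3,2))
      + blockForm₄ q0 q1 q2 (x (1,1)) (x (3,1)) (x (1,3)) (x (3,3)) := by
  simp +decide only [star_trivial, dotProduct, mulVec, Fintype.sum_prod_type, Fin.sum_univ_four,
    Matrix.add_apply, massMO3, filterMO3, diagonal_apply, Prod.mk.injEq]
  norm_num [blockForm₂, blockForm₄]
  ring

theorem eq_zero_of_mul_sq_nonpos {R : Type*} [Ring R] [LinearOrder R] [IsStrictOrderedRing R]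
    {a x : R} (ha : 0 < a) (h : a * x ^ 2 ≤ 0) : x = 0 :=
  pow_eq_zero_iff two_ne_zero |>.mp <| (nonpos_of_mul_nonpos_right h ha).antisymm (sq_nonneg x)

theorem blockForm₂_pos_iff (q1 q2 : ℝ) :
    (∀ x y : ℝ, (x, y) ≠ 0 → 0 < blockForm₂ q1 q2 x y) ↔ 140 * q1 - 189 * q2 ^ 2 + 16 > 0 := by
  have sos : ∀ x y, 60 * blockForm₂ q1 q2 x y =
      (4*x - 9*q2*y)^2 + 3/7*(140*q1 - 189*q2^2 + 16)*y^2 := by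
    intro x y; unfold blockForm₂; ring
  constructor
  · intro h
    have := h (9*q2) 4 (by simp)
    nlinarith [sos (9*q2) 4]
  · intro hc x y hxy
    by_contra! hle
    have hy : y = 0 := eq_zero_of_mul_sq_nonpos (by positivity)
      (by nlinarith [sos x y, sq_nonneg (4*x - 9*q2*y)])
    subst hy
    have hx : x = 0 := eq_zero_of_mul_sq_nonpos (by norm_num : (0:ℝ) < 16) (by nlinarith [sos x 0])
    simp [hx] at hxy

theorem blockForm₄_pos_iff (q0 q1 q2 : ℝ) :
    (∀ x₁ x₂ x₃ x₄ : ℝ, (x₁, x₂, x₃, x₄) ≠ 0 → 0 < blockForm₄ q0 q1 q2 x₁ x₂ x₃ x₄) ↔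
      q2 ^ 2 < 16 / 441 ∧
      (4 - 21 * q2) *
        (1008 * q2 + 2352 * q0 + 12348 * q2 * q0 - 5292 * q2 ^ 2 - 27783 * q2 ^ 3 -
          68600 * q1 ^ 2 + 192) > 0 := by
  set P := 1008 * q2 + 2352 * q0 + 12348 * q2 * q0 - 5292 * q2 ^ 2 - 27783 * q2 ^ 3 -
    68600 * q1 ^ 2 + 192 with hP
  have sos : ∀ x₁ x₂ x₃ x₄, (4 + 21*q2) * blockForm₄ q0 q1 q2 x₁ x₂ x₃ x₄ =
      (4 + 21*q2)/36 * (4*x₁ + 9*q2*x₄)^2 + ((4 + 21*q2)*(x₂ + x₃) - 70*q1*x₄)^2/42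
      + (4 + 21*q2)*(4 - 21*q2)/42 * (x₂ - x₃)^2 + P/588 * x₄^2 := by
    intro x₁ x₂ x₃ x₄; unfold blockForm₄; rw [hP]; ring
  constructor
  · intro h
    have hplus : 0 < 4 + 21*q2 := by
      have := h 0 1 1 0 (by simp); unfold blockForm₄ at this; linarith
    have hminus : 0 < 4 - 21*q2 := by
      have := h 0 1 (-1) 0 (by simp); unfold blockForm₄ at this; linarith
    have hPpos : 0 < P := by
      -- the cofactor vector of the symmetric `3 × 3` part, where the form is proportional to
      -- that block's determinant
      have hv := h (-9*q2*(4 + 21*q2)) (140*q1) (140*q1) (4*(4 + 21*q2)) (by simp [hplus.ne'])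
      have hval : blockForm₄ q0 q1 q2 (-9*q2*(4 + 21*q2)) (140*q1) (140*q1) (4*(4 + 21*q2)) =
          4/147 * (4 + 21*q2) * P := by
        unfold blockForm₄; rw [hP]; ring
      rw [hval] at hv
      exact pos_of_mul_pos_right hv (by positivity)
    exact ⟨by nlinarith, mul_pos hminus hPpos⟩
  · rintro ⟨hq2, hdet⟩ x₁ x₂ x₃ x₄ hx
    have hplus : 0 < 4 + 21*q2 := by nlinarith
    have hminus : 0 < 4 - 21*q2 := by nlinarith
    have hPpos : 0 < P := pos_of_mul_pos_right hdet hminus.le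
    by_contra! hle
    have hsum := sos x₁ x₂ x₃ x₄
    have hnonpos : (4 + 21*q2) * blockForm₄ q0 q1 q2 x₁ x₂ x₃ x₄ ≤ 0 :=
      mul_nonpos_of_nonneg_of_nonpos hplus.le hle
    have h₄ : x₄ = 0 := eq_zero_of_mul_sq_nonpos (by positivity)
      (by nlinarith [sq_nonneg (4*x₁ + 9*q2*x₄), sq_nonneg (x₂ - x₃),
                     sq_nonneg ((4 + 21*q2)*(x₂ + x₃) - 70*q1*x₄)])
    subst h₄
    have hpm : 0 ≤ (4 + 21*q2) * (4 - 21*q2) * (x₂ - x₃)^2 := by positivity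
    have h₁ : x₁ = 0 := eq_zero_of_mul_sq_nonpos (a := 4 * (4 + 21*q2) / 9) (by positivity)
      (by nlinarith [sq_nonneg ((4 + 21*q2)*(x₂ + x₃))])
    have hs : x₂ + x₃ = 0 := eq_zero_of_mul_sq_nonpos (a := (4 + 21*q2)^2 / 42) (by positivity)
      (by nlinarith [mul_nonneg hplus.le (sq_nonneg x₁)])
    have hd : x₂ - x₃ = 0 := eq_zero_of_mul_sq_nonpos (a := (4 + 21*q2) * (4 - 21*q2) / 42)
      (by positivity)
      (by nlinarith [mul_nonneg hplus.le (sq_nonneg x₁), sq_nonneg ((4 + 21*q2)*(x₂ + x₃))])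
    exact hx (by simp only [Prod.mk_eq_zero, and_true]; exact ⟨h₁, by linarith, by linarith⟩)

theorem massMO3_add_filterMO3_isHermitian (q0 q1 q2 : ℝ) :
    (massMO3 + filterMO3 q0 q1 q2).IsHermitian :=
  isHermitian_iff_isSymm.mpr ((isSymm_diagonal _).add (filterMO3_isSymm q0 q1 q2))

theorem posDef_massMO3_add_filterMO3_of_blocks {q0 q1 q2 : ℝ} (hc : 0 < 4 + 9 * q2)
    (h₂ : ∀ x y : ℝ, (x, y) ≠ 0 → 0 < blockForm₂ q1 q2 x y)
    (h₄ : ∀ x₁ x₂ x₃ x₄ : ℝ, (x₁, x₂, x₃, x₄) ≠ 0 → 0 < blockForm₄ q0 q1 q2 x₁ x₂ x₃ x₄) :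
    (massMO3 + filterMO3 q0 q1 q2).PosDef := by
  refine .of_dotProduct_mulVec_pos (massMO3_add_filterMO3_isHermitian q0 q1 q2) fun x hx => ?_
  rw [dotProduct_massMO3_add_filterMO3_mulVec]
  have n₂ : ∀ a b, 0 ≤ blockForm₂ q1 q2 a b := fun a b =>
    (eq_or_ne (a, b) 0).elim (fun h => by simp_all [blockForm₂]) fun h => (h₂ a b h).le
  have n₄ : ∀ a b c d, 0 ≤ blockForm₄ q0 q1 q2 a b c d := fun a b c d =>
    (eq_or_ne (a, b, c, d) 0).elim (fun h => by simp_all [blockForm₄]) fun h => (h₄ a b c d h).le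
  have k₂ : ∀ a b, blockForm₂ q1 q2 a b ≤ 0 → a = 0 ∧ b = 0 := fun a b hle => by
    simpa using not_imp_comm.mp (h₂ a b) hle.not_gt
  have k₄ : ∀ a b c d, blockForm₄ q0 q1 q2 a b c d ≤ 0 → a = 0 ∧ b = 0 ∧ c = 0 ∧ d = 0 :=
    fun a b c d hle => by simpa using not_imp_comm.mp (h₄ a b c d) hle.not_gt
  -- every summand is nonnegative, so if the sum is not positive each summand vanishes
  by_contra! hle
  have := n₂ (x (2,1)) (x (2,3)); have := n₂ (x (1,2)) (x (3,2))
  have := n₄ (x (1,1)) (x (3,1)) (x (1,3)) (x (3,3))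
  have : 0 ≤ 4*x (0,0)^2 := by positivity
  have : 0 ≤ 4/3*x (0,1)^2 := by positivity
  have : 0 ≤ 4/5*x (0,2)^2 := by positivity
  have : 0 ≤ 4/7*x (0,3)^2 := by positivity
  have : 0 ≤ 4/3*x (1,0)^2 := by positivity
  have : 0 ≤ 4/5*x (2,0)^2 := by positivity
  have : 0 ≤ 4/7*x (3,0)^2 := by positivity
  have : 0 ≤ (4+9*q2)/25*x (2,2)^2 := by positivity
  obtain ⟨h21, h23⟩ := k₂ (x (2,1)) (x (2,3)) (by linarith)
  obtain ⟨h12, h32⟩ := k₂ (x (1,2)) (x (3,2)) (by linarith)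
  obtain ⟨h11, h31, h13, h33⟩ := k₄ (x (1,1)) (x (3,1)) (x (1,3)) (x (3,3)) (by linarith)
  have h00 := eq_zero_of_mul_sq_nonpos (by norm_num) (by linarith : 4*x (0,0)^2 ≤ 0)
  have h01 := eq_zero_of_mul_sq_nonpos (by norm_num) (by linarith : 4/3*x (0,1)^2 ≤ 0)
  have h02 := eq_zero_of_mul_sq_nonpos (by norm_num) (by linarith : 4/5*x (0,2)^2 ≤ 0)
  have h03 := eq_zero_of_mul_sq_nonpos (by norm_num) (by linarith : 4/7*x (0,3)^2 ≤ 0)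
  have h10 := eq_zero_of_mul_sq_nonpos (by norm_num) (by linarith : 4/3*x (1,0)^2 ≤ 0)
  have h20 := eq_zero_of_mul_sq_nonpos (by norm_num) (by linarith : 4/5*x (2,0)^2 ≤ 0)
  have h30 := eq_zero_of_mul_sq_nonpos (by norm_num) (by linarith : 4/7*x (3,0)^2 ≤ 0)
  have h22 := eq_zero_of_mul_sq_nonpos hc (by linarith : (4+9*q2) * x (2,2)^2 ≤ 0)
  refine hx (funext fun ⟨i, j⟩ => ?_)
  fin_cases i <;> fin_cases j <;> assumption

theorem posDef_massMO3_add_filterMO3_iff (q0 q1 q2 : ℝ) :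
    (massMO3 + filterMO3 q0 q1 q2).PosDef ↔
      0 < 4 + 9 * q2 ∧
      (∀ x y : ℝ, (x, y) ≠ 0 → 0 < blockForm₂ q1 q2 x y) ∧
      (∀ x₁ x₂ x₃ x₄ : ℝ, (x₁, x₂, x₃, x₄) ≠ 0 → 0 < blockForm₄ q0 q1 q2 x₁ x₂ x₃ x₄) := by
  refine ⟨fun h => ?_, fun ⟨hc, h₂, h₄⟩ => posDef_massMO3_add_filterMO3_of_blocks hc h₂ h₄⟩
  have hpos := fun x (hx : x ≠ 0) => dotProduct_massMO3_add_filterMO3_mulVec q0 q1 q2 x ▸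
    h.dotProduct_mulVec_pos hx
  refine ⟨?_, fun x y hxy => ?_, fun x₁ x₂ x₃ x₄ hx => ?_⟩
  · have := hpos (fun p => if p = (2, 2) then 1 else 0) fun h0 => by
      simpa using congrFun h0 (2, 2)
    simp [blockForm₂, blockForm₄] at this
    linarith
  · have := hpos (fun p => if p = (2, 1) then x else if p = (2, 3) then y else 0) fun h0 => hxy <| by
      simpa using And.intro (congrFun h0 (2, 1)) (congrFun h0 (2, 3))
    simpa [blockForm₂, blockForm₄] using this
  · have := hpos (fun p => if p = (1, 1) then x₁ else if p = (3, 1) then x₂ else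
        if p = (1, 3) then x₃ else if p = (3, 3) then x₄ else 0) fun h0 => hx <| by
      simpa using ⟨congrFun h0 (1, 1), congrFun h0 (3, 1), congrFun h0 (1, 3), congrFun h0 (3, 3)⟩
    simpa [blockForm₂, blockForm₄] using this

/-- For the degree-3 maximal order basis, `M + Q` is positive definite iff
`q2² < 16/441`, `140 q1 - 189 q2² + 16 > 0`, and
`(4 - 21 q2)(1008 q2 + 2352 q0 + 12348 q2 q0 - 5292 q2² - 27783 q2³ - 68600 q1² + 192) > 0`. -/
theorem stmt_1 (q0 q1 q2 : ℝ) :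
    (massMO3 + filterMO3 q0 q1 q2).PosDef ↔
      q2 ^ 2 < 16 / 441 ∧
      140 * q1 - 189 * q2 ^ 2 + 16 > 0 ∧
      (4 - 21 * q2) *
        (1008 * q2 + 2352 * q0 + 12348 * q2 * q0 - 5292 * q2 ^ 2 - 27783 * q2 ^ 3 -
          68600 * q1 ^ 2 + 192) > 0 := by
  rw [posDef_massMO3_add_filterMO3_iff, blockForm₂_pos_iff, blockForm₄_pos_iff]
  constructor
  · rintro ⟨-, h₂, h₁, h₃⟩
    exact ⟨h₁, h₂, h₃⟩
  · rintro ⟨h₁, h₂, h₃⟩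
    exact ⟨by nlinarith, h₂, h₁, h₃⟩
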